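/- Let Ω be a properly convex open subset of ℙ²(ℝ) and p ∈ ∂Ω a point where the boundary is not C¹ (the set of supporting lines at p is not a single line). Then every pic of Ω with vertex at infinity p — i.e. every open triangle contained in Ω with exactly one vertex equal to p and that vertex on ∂Ω — has infinite Busemann volume μ_Ω. -/

import Mathlib

open MeasureTheory

noncomputable section

/-- Parameter of the intersection point `p⁺` of the half-line from `x` in direction `v`
with `∂Ω`. -/
def tPlus (Ω : Set (EuclideanSpace ℝ (Fin 2))) (x v : EuclideanSpace ℝ (Fin 2)) : ℝ :=
  sSup {t : ℝ | x + t • v ∈ Ω}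

/-- Parameter of the intersection point `p⁻` of the half-line from `x` in direction `-v`
with `∂Ω`. -/
def tMinus (Ω : Set (EuclideanSpace ℝ (Fin 2))) (x v : EuclideanSpace ℝ (Fin 2)) : ℝ :=
  sInf {t : ℝ | x + t • v ∈ Ω}

/-- The Hilbert–Finsler norm `‖v‖ₓ = (1/‖x - p⁻‖ + 1/‖x - p⁺‖)·‖v‖`. -/
def finslerNorm (Ω : Set (EuclideanSpace ℝ (Fin 2))) (x v : EuclideanSpace ℝ (Fin 2)) : ℝ :=
  (1 / ‖x - (x + tMinus Ω x v • v)‖ + 1 / ‖x - (x + tPlus Ω x v • v)‖) * ‖v‖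

/-- The unit ball `B_x(1)` of the Hilbert–Finsler norm at `x`. -/
def finslerBall (Ω : Set (EuclideanSpace ℝ (Fin 2))) (x : EuclideanSpace ℝ (Fin 2)) :
    Set (EuclideanSpace ℝ (Fin 2)) :=
  {v | finslerNorm Ω x v < 1}

/-- The Lebesgue measure normalized so that the Euclidean unit ball has volume `1`. -/
def nVol (s : Set (EuclideanSpace ℝ (Fin 2))) : ENNReal :=
  volume s / volume {v : EuclideanSpace ℝ (Fin 2) | ‖v‖ < 1}

/-- The Busemann measure of `A ⊆ Ω`:  `μ_Ω(A) = ∫_A dVol(x) / Vol(B_x(1))`, where `Vol`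
is the normalized Lebesgue measure. -/
def busemann (Ω A : Set (EuclideanSpace ℝ (Fin 2))) : ENNReal :=
  ∫⁻ x in A, (nVol (finslerBall Ω x))⁻¹
    ∂((volume {v : EuclideanSpace ℝ (Fin 2) | ‖v‖ < 1})⁻¹ • volume)

end

/-! A vector `v` of the Finsler unit ball at `x ∈ Ω` satisfies `x ± v ∈ Ω`, so the two supporting
lines at `p` give `|f v| < f (p - x)` and `|g v| < g (p - x)`. Since `f` and `g` are independent,
the area of `B_x(1)` is `O(f (p - x) · g (p - x))`, and the Busemann density is
`≳ 1 / (f (p - x) · g (p - x))`. A homothety of ratio `λ` centred at `p` maps the triangle into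
itself, multiplies this lower bound by `λ⁻²` and areas by `λ²`; hence the images of one small open
set under the ratios `2⁻ⁿ`, which `f (p - ·)` keeps apart, are disjoint pieces of the triangle of
equal positive mass. -/

open Bornology Module Set AffineMap
open scoped ENNReal NNReal Function

local notation "ℝ²" => EuclideanSpace ℝ (Fin 2)

theorem injective_prod_of_not_exists_eq_smul {K V : Type*} [Field K] [AddCommGroup V]
    [Module K V] (hV : finrank K V = 2) {f g : V →ₗ[K] K} (hf : f ≠ 0)
    (hfg : ¬∃ c : K, g = c • f) : Function.Injective (f.prod g) := by
  rw [← LinearMap.ker_eq_bot, Submodule.eq_bot_iff]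
  intro v hv
  obtain ⟨hfv, hgv⟩ : f v = 0 ∧ g v = 0 := by simpa using hv
  by_contra hv0
  obtain ⟨w, hw⟩ : ∃ w, f w ≠ 0 := by
    by_contra! h
    exact hf (LinearMap.ext h)
  have hli : LinearIndependent K ![v, w] := by
    refine linearIndependent_fin2.2 ⟨fun h => hw (by simp_all), fun a h => hv0 ?_⟩
    simp only [Matrix.cons_val_one, Matrix.cons_val_zero] at h
    have ha : a = 0 := by simpa [← h, hw] using hfv
    simp [← h, ha]
  let b := basisOfLinearIndependentOfCardEqFinrank hli (by simp [hV])
  refine hfg ⟨g w / f w, b.ext fun i => ?_⟩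
  fin_cases i <;> simp [b, hfv, hgv, hw]

theorem Convex.image_homothety_interior_subset {E : Type*} [AddCommGroup E] [Module ℝ E]
    [TopologicalSpace E] [IsTopologicalAddGroup E] [ContinuousSMul ℝ E] {s : Set E}
    (hs : Convex ℝ s) {p : E} (hp : p ∈ closure s) {t : ℝ} (ht₀ : 0 < t) (ht₁ : t ≤ 1) :
    homothety p t '' interior s ⊆ interior s := by
  rintro _ ⟨y, hy, rfl⟩
  convert hs.combo_interior_closure_mem_interior hy hp ht₀ (sub_nonneg.2 ht₁)
    (add_sub_cancel t 1) using 1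
  simp only [homothety_apply, vsub_eq_sub, vadd_eq_add, smul_sub, sub_smul, one_smul]
  abel

theorem map_sub_homothety {E 𝓕 : Type*} [AddCommGroup E] [Module ℝ E] [FunLike 𝓕 E ℝ]
    [LinearMapClass 𝓕 ℝ E ℝ] (f : 𝓕) (p y : E) (t : ℝ) :
    f (p - homothety p t y) = t * f (p - y) := by
  rw [homothety_apply, vsub_eq_sub, vadd_eq_add, sub_add_cancel_right, ← smul_neg, neg_sub,
    map_smul, smul_eq_mul]

theorem interior_convexHull_nonempty_of_not_collinear {E : Type*} [NormedAddCommGroup E]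
    [NormedSpace ℝ E] [FiniteDimensional ℝ E] (hE : finrank ℝ E = 2) {p a b : E}
    (h : ¬Collinear ℝ ({p, a, b} : Set E)) : (interior (convexHull ℝ {p, a, b})).Nonempty := by
  have hai : AffineIndependent ℝ ![p, a, b] := affineIndependent_iff_not_collinear_set.2 h
  have := hai.affineSpan_eq_top_iff_card_eq_finrank_add_one.2 (by simp [hE])
  rw [interior_convexHull_nonempty_iff_affineSpan_eq_top]
  rw [Matrix.range_cons, Matrix.range_cons, Matrix.range_cons, Matrix.range_empty] at this
  rwa [union_empty, singleton_union, singleton_union] at this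

theorem setLIntegral_eq_top_of_pairwise_disjoint {α ι : Type*} [MeasurableSpace α]
    [Countable ι] [Infinite ι] {μ : Measure α} {s : Set α} {A : ι → Set α}
    (hA : ∀ i, MeasurableSet (A i)) (hAs : ∀ i, A i ⊆ s) (hdisj : Pairwise (Disjoint on A))
    {F : α → ℝ≥0∞} {ε : ℝ≥0∞} (hε : ε ≠ 0) (hF : ∀ i, ε ≤ ∫⁻ x in A i, F x ∂μ) :
    ∫⁻ x in s, F x ∂μ = ⊤ := by
  refine eq_top_iff.2 ?_
  calc ⊤ = ∑' _ : ι, ε := (ENNReal.tsum_const_eq_top_of_ne_zero hε).symm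
    _ ≤ ∑' i, ∫⁻ x in A i, F x ∂μ := ENNReal.tsum_le_tsum hF
    _ = ∫⁻ x in ⋃ i, A i, F x ∂μ := (lintegral_iUnion hA hdisj F).symm
    _ ≤ ∫⁻ x in s, F x ∂μ := lintegral_mono_set (iUnion_subset hAs)

section HaarMeasure

variable {E : Type*} [NormedAddCommGroup E] [NormedSpace ℝ E] [MeasurableSpace E] [BorelSpace E]
  [FiniteDimensional ℝ E] (μ : Measure E) [μ.IsAddHaarMeasure]

theorem exists_measure_setOf_abs_lt_eq (hE : finrank ℝ E = 2) {f g : E →L[ℝ] ℝ} (hf : f ≠ 0)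
    (hfg : ¬∃ c : ℝ, g = c • f) :
    ∃ K : ℝ≥0, ∀ s t : ℝ, μ {v | |f v| < s ∧ |g v| < t} =
      K * (ENNReal.ofReal (2 * s) * ENNReal.ofReal (2 * t)) := by
  have hinj : Function.Injective ((f : E →ₗ[ℝ] ℝ).prod (g : E →ₗ[ℝ] ℝ)) := by
    refine injective_prod_of_not_exists_eq_smul hE
      (fun h => hf (ContinuousLinearMap.coe_injective (by simpa using h)))
      fun ⟨c, hc⟩ => hfg ⟨c, ContinuousLinearMap.coe_injective (by simpa using hc)⟩
  have hsurj := (LinearMap.injective_iff_surjective_of_finrank_eq_finrank (by simp [hE])).1 hinj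
  let L : E ≃L[ℝ] ℝ × ℝ := (LinearEquiv.ofBijective _ ⟨hinj, hsurj⟩).toContinuousLinearEquiv
  refine ⟨(μ.map L).addHaarScalarFactor volume, fun s t => ?_⟩
  have hset : {v | |f v| < s ∧ |g v| < t} = L ⁻¹' (Ioo (-s) s ×ˢ Ioo (-t) t) := by
    ext v
    simp only [mem_ofPred_eq, mem_preimage, mem_prod, mem_Ioo, abs_lt]
    rfl
  rw [hset, ← Measure.map_apply L.continuous.measurable (measurableSet_Ioo.prod measurableSet_Ioo)]
  nth_rw 1 [Measure.isAddLeftInvariant_eq_smul (μ.map L) volume]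
  have hbox : volume (Ioo (-s) s ×ˢ Ioo (-t) t) =
      ENNReal.ofReal (2 * s) * ENNReal.ofReal (2 * t) := by
    rw [Measure.volume_eq_prod, Measure.prod_prod, Real.volume_Ioo, Real.volume_Ioo]
    ring_nf
  rw [Measure.smul_apply, hbox]
  rfl

theorem le_setLIntegral_image_homothety {B : Set E} (hB : IsOpen B) (p : E) {t : ℝ} (ht : t ≠ 0)
    {F : E → ℝ≥0∞} {ε : ℝ≥0∞}
    (hF : ∀ x ∈ homothety p t '' B, ε / ENNReal.ofReal |t ^ finrank ℝ E| ≤ F x) :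
    ε * μ B ≤ ∫⁻ x in homothety p t '' B, F x ∂μ := by
  have hscale : ENNReal.ofReal |t ^ finrank ℝ E| ≠ 0 := by simp [ht]
  calc ε * μ B = ε / ENNReal.ofReal |t ^ finrank ℝ E| * μ (homothety p t '' B) := by
        rw [Measure.addHaar_image_homothety, ← mul_assoc,
          ENNReal.div_mul_cancel hscale ENNReal.ofReal_ne_top]
    _ = ∫⁻ _ in homothety p t '' B, ε / ENNReal.ofReal |t ^ finrank ℝ E| ∂μ :=
        (setLIntegral_const _ _).symm
    _ ≤ ∫⁻ x in homothety p t '' B, F x ∂μ :=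
        setLIntegral_mono' (homothety_isOpenMap p t ht B hB).measurableSet hF

theorem setLIntegral_inv_mul_eq_top (hE : finrank ℝ E = 2) {s : Set E} (hs : Convex ℝ s)
    {p q : E} (hp : p ∈ closure s) (hq : q ∈ interior s) {f g : E →L[ℝ] ℝ}
    (hf : ∀ x ∈ interior s, 0 < f (p - x)) (hg : ∀ x ∈ interior s, 0 < g (p - x))
    {C : ℝ≥0∞} (hC : C ≠ ⊤) :
    ∫⁻ x in interior s, (C * ENNReal.ofReal (f (p - x) * g (p - x)))⁻¹ ∂μ = ⊤ := by
  set a := 3 / 2 * f (p - q) with ha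
  set b := g (p - q) + 1 with hb
  have ha₀ : 0 < a := by have := hf q hq; positivity
  set B := interior s ∩ (fun y => f (p - y)) ⁻¹' Ioo (a / 2) a ∩ (fun y => g (p - y)) ⁻¹' Iio b
  have hBo : IsOpen B :=
    (isOpen_interior.inter (isOpen_Ioo.preimage (by fun_prop))).inter
      (isOpen_Iio.preimage (by fun_prop))
  have hqB : q ∈ B := by
    have := hf q hq
    exact ⟨⟨hq, by simp only [mem_preimage, mem_Ioo]; constructor <;> linarith⟩,
      by simp [hb]⟩
  set r : ℕ → ℝ := fun n => 2⁻¹ ^ n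
  have hr : ∀ n, 0 < r n := fun n => by positivity
  set A : ℕ → Set E := fun n => homothety p (r n) '' B
  have hAs : ∀ n, A n ⊆ interior s := fun n =>
    (image_mono (inter_subset_left.trans inter_subset_left)).trans
      (hs.image_homothety_interior_subset hp (hr n) (pow_le_one₀ (by norm_num) (by norm_num)))
  have hAf : ∀ n, A n ⊆ (fun x => f (p - x)) ⁻¹' Ioo (r (Order.succ n) * a) (r n * a) := by
    rintro n _ ⟨y, ⟨⟨-, hy₁, hy₂⟩, -⟩, rfl⟩
    simp only [mem_preimage, mem_Ioo, map_sub_homothety, Order.succ_eq_add_one, r, pow_succ,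
      mul_assoc]
    exact ⟨mul_lt_mul_of_pos_left (by linarith) (hr n), mul_lt_mul_of_pos_left hy₂ (hr n)⟩
  have hdisj : Pairwise (Disjoint on A) :=
    (((pow_right_anti₀ (by norm_num) (by norm_num)).mul_const ha₀.le)
      |>.pairwise_disjoint_on_Ioo_succ).mono fun m n h => (h.preimage _).mono (hAf m) (hAf n)
  refine setLIntegral_eq_top_of_pairwise_disjoint
    (fun n => (homothety_isOpenMap p _ (hr n).ne' B hBo).measurableSet) hAs hdisj
    (ε := (C * ENNReal.ofReal (a * b))⁻¹ * μ B) ?_ fun n => ?_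
  · exact mul_ne_zero (ENNReal.inv_ne_zero.2 (ENNReal.mul_ne_top hC ENNReal.ofReal_ne_top))
      (hBo.measure_pos μ ⟨q, hqB⟩).ne'
  · refine le_setLIntegral_image_homothety μ hBo p (hr n).ne' ?_
    rintro _ ⟨y, ⟨⟨hy, -, hy₂⟩, hy₃⟩, rfl⟩
    have hprod : r n * f (p - y) * (r n * g (p - y)) ≤ |r n ^ 2| * (a * b) := by
      rw [abs_of_pos (pow_pos (hr n) 2), mul_mul_mul_comm, ← sq]
      exact mul_le_mul_of_nonneg_left (mul_le_mul hy₂.le hy₃.le (hg y hy).le ha₀.le)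
        (sq_nonneg _)
    rw [hE, map_sub_homothety, map_sub_homothety]
    calc (C * ENNReal.ofReal (a * b))⁻¹ / ENNReal.ofReal |r n ^ 2|
        = (C * ENNReal.ofReal (|r n ^ 2| * (a * b)))⁻¹ := by
          rw [div_eq_mul_inv, ← ENNReal.mul_inv (Or.inr ENNReal.ofReal_ne_top)
            (Or.inl (ENNReal.mul_ne_top hC ENNReal.ofReal_ne_top)), mul_assoc,
            mul_comm (ENNReal.ofReal _), ← ENNReal.ofReal_mul (abs_nonneg _)]
      _ ≤ (C * ENNReal.ofReal (r n * f (p - y) * (r n * g (p - y))))⁻¹ :=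
          ENNReal.inv_le_inv.2 (mul_le_mul_right (ENNReal.ofReal_le_ofReal hprod) C)

end HaarMeasure

section Finsler

variable {Ω : Set ℝ²} {x v : ℝ²}

theorem finslerNorm_eq (hv : v ≠ 0) :
    finslerNorm Ω x v = 1 / |tMinus Ω x v| + 1 / |tPlus Ω x v| := by
  have hv' : ‖v‖ ≠ 0 := norm_ne_zero_iff.2 hv
  simp only [finslerNorm, sub_add_cancel_left, norm_neg, norm_smul, Real.norm_eq_abs]
  rw [add_mul, one_div_mul_eq_div, one_div_mul_eq_div, div_mul_cancel_right₀ hv',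
    div_mul_cancel_right₀ hv', one_div, one_div]

theorem isOpen_setOf_add_smul_mem (hΩ : IsOpen Ω) : IsOpen {t : ℝ | x + t • v ∈ Ω} :=
  hΩ.preimage (by fun_prop)

theorem isBounded_setOf_add_smul_mem (hΩ : IsBounded Ω) (hv : v ≠ 0) :
    IsBounded {t : ℝ | x + t • v ∈ Ω} := by
  have hne : x ≠ x + v := by simpa using hv
  convert (antilipschitzWith_lineMap (𝕜 := ℝ) hne).isBounded_preimage hΩ using 1
  ext t
  simp [lineMap_apply, add_comm]

theorem tMinus_neg_and_tPlus_pos (hopen : IsOpen Ω) (hbdd : IsBounded Ω) (hx : x ∈ Ω)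
    (hv : v ≠ 0) : tMinus Ω x v < 0 ∧ 0 < tPlus Ω x v := by
  have h0 : (0 : ℝ) ∈ {t : ℝ | x + t • v ∈ Ω} := by simpa using hx
  obtain ⟨ε, hε, hball⟩ := Metric.isOpen_iff.1 (isOpen_setOf_add_smul_mem hopen) 0 h0
  have hS := isBounded_setOf_add_smul_mem (x := x) hbdd hv
  constructor
  · refine (csInf_le hS.bddBelow (hball ?_)).trans_lt (neg_lt_zero.2 (half_pos hε))
    simp [abs_of_pos hε, hε]
  · refine (half_pos hε).trans_le (le_csSup hS.bddAbove (hball ?_))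
    simp [abs_of_pos hε, hε]

theorem add_smul_mem_of_lt_tPlus (hconv : Convex ℝ Ω) (hx : x ∈ Ω) {s : ℝ} (hs : 0 ≤ s)
    (h : s < tPlus Ω x v) : x + s • v ∈ Ω := by
  obtain ⟨t, ht, hst⟩ := exists_lt_of_lt_csSup ⟨0, by simpa using hx⟩ h
  have ht0 : 0 < t := hs.trans_lt hst
  simpa [smul_smul, div_mul_cancel₀ s ht0.ne'] using
    hconv.add_smul_mem hx ht ⟨div_nonneg hs ht0.le, (div_le_one ht0).2 hst.le⟩

theorem add_smul_mem_of_tMinus_lt (hconv : Convex ℝ Ω) (hx : x ∈ Ω) {s : ℝ} (hs : s ≤ 0)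
    (h : tMinus Ω x v < s) : x + s • v ∈ Ω := by
  obtain ⟨t, ht, hts⟩ := exists_lt_of_csInf_lt ⟨0, by simpa using hx⟩ h
  have ht0 : t < 0 := hts.trans_le hs
  simpa [smul_smul, div_mul_cancel₀ s ht0.ne] using
    hconv.add_smul_mem hx ht ⟨div_nonneg_of_nonpos hs ht0.le, (div_le_one_of_neg ht0).2 hts.le⟩

theorem add_mem_and_sub_mem_of_mem_finslerBall (hopen : IsOpen Ω) (hconv : Convex ℝ Ω)
    (hbdd : IsBounded Ω) (hx : x ∈ Ω) (hv : v ∈ finslerBall Ω x) : x + v ∈ Ω ∧ x - v ∈ Ω := by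
  rcases eq_or_ne v 0 with rfl | hv0
  · simpa using hx
  obtain ⟨hminus, hplus⟩ := tMinus_neg_and_tPlus_pos hopen hbdd hx hv0
  have hnorm : 1 / -tMinus Ω x v + 1 / tPlus Ω x v < 1 := by
    rwa [finslerBall, mem_ofPred_eq, finslerNorm_eq hv0, abs_of_neg hminus, abs_of_pos hplus] at hv
  have h₁ : 1 < tPlus Ω x v :=
    (div_lt_one hplus).1 (by linarith [one_div_pos.2 (neg_pos.2 hminus)])
  have h₂ : 1 < -tMinus Ω x v :=
    (div_lt_one (neg_pos.2 hminus)).1 (by linarith [one_div_pos.2 hplus])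
  refine ⟨by simpa using add_smul_mem_of_lt_tPlus hconv hx zero_le_one h₁, ?_⟩
  simpa [sub_eq_add_neg] using
    add_smul_mem_of_tMinus_lt hconv hx (neg_nonpos.2 zero_le_one) (by linarith : tMinus Ω x v < -1)

theorem abs_lt_of_mem_finslerBall (hopen : IsOpen Ω) (hconv : Convex ℝ Ω) (hbdd : IsBounded Ω)
    {f : ℝ² →L[ℝ] ℝ} {p : ℝ²} (hf : ∀ y ∈ Ω, f y < f p) (hx : x ∈ Ω)
    (hv : v ∈ finslerBall Ω x) : |f v| < f (p - x) := by
  obtain ⟨hplus, hminus⟩ := add_mem_and_sub_mem_of_mem_finslerBall hopen hconv hbdd hx hv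
  have h₁ := hf _ hplus
  have h₂ := hf _ hminus
  rw [map_add] at h₁
  rw [map_sub] at h₂ ⊢
  exact abs_lt.2 ⟨by linarith, by linarith⟩

end Finsler

theorem exists_nVol_finslerBall_le {Ω : Set ℝ²} (hopen : IsOpen Ω) (hconv : Convex ℝ Ω)
    (hbdd : IsBounded Ω) {p : ℝ²} {f g : ℝ² →L[ℝ] ℝ} (hf0 : f ≠ 0) (hfg : ¬∃ c : ℝ, g = c • f)
    (hfsupp : ∀ x ∈ Ω, f x < f p) (hgsupp : ∀ x ∈ Ω, g x < g p) :
    ∃ C : ℝ≥0∞, C ≠ ⊤ ∧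
      ∀ x ∈ Ω, nVol (finslerBall Ω x) ≤ C * ENNReal.ofReal (f (p - x) * g (p - x)) := by
  obtain ⟨K, hK⟩ := exists_measure_setOf_abs_lt_eq volume (by simp) hf0 hfg
  set c := volume {v : ℝ² | ‖v‖ < 1}
  have hc : c ≠ 0 := by
    simpa [c, ← ball_zero_eq] using (Metric.measure_ball_pos volume (0 : ℝ²) one_pos).ne'
  refine ⟨4 * K / c, ENNReal.div_ne_top (by finiteness) hc, fun x hx => ?_⟩
  have hsub : finslerBall Ω x ⊆ {v | |f v| < f (p - x) ∧ |g v| < g (p - x)} := fun v hv =>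
    ⟨abs_lt_of_mem_finslerBall hopen hconv hbdd hfsupp hx hv,
      abs_lt_of_mem_finslerBall hopen hconv hbdd hgsupp hx hv⟩
  have hfx : 0 ≤ f (p - x) := by rw [map_sub, sub_nonneg]; exact (hfsupp x hx).le
  calc nVol (finslerBall Ω x) ≤ volume {v | |f v| < f (p - x) ∧ |g v| < g (p - x)} / c :=
        ENNReal.div_le_div_right (measure_mono hsub) c
    _ = 4 * K / c * ENNReal.ofReal (f (p - x) * g (p - x)) := by
        rw [hK, ← ENNReal.ofReal_mul (by positivity), mul_mul_mul_comm,
          ENNReal.ofReal_mul (by norm_num), div_eq_mul_inv, div_eq_mul_inv]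
        norm_num
        ring

theorem pic_infinite_volume_of_not_C1_general
    (Ω : Set (EuclideanSpace ℝ (Fin 2)))
    (hopen : IsOpen Ω) (hconv : Convex ℝ Ω) (hbdd : Bornology.IsBounded Ω)
    (p : EuclideanSpace ℝ (Fin 2)) (hp : p ∈ frontier Ω)
    (f g : EuclideanSpace ℝ (Fin 2) →L[ℝ] ℝ) (hf0 : f ≠ 0)
    (hfsupp : ∀ x ∈ Ω, f x < f p) (hgsupp : ∀ x ∈ Ω, g x < g p)
    (hfg : ¬ ∃ c : ℝ, g = c • f)
    (a b : EuclideanSpace ℝ (Fin 2)) (ha : a ∈ Ω) (hb : b ∈ Ω)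
    (hnc : ¬ Collinear ℝ ({p, a, b} : Set (EuclideanSpace ℝ (Fin 2)))) :
    busemann Ω (interior (convexHull ℝ ({p, a, b} : Set (EuclideanSpace ℝ (Fin 2))))) = ⊤ := by
  obtain ⟨C, hC, hnVol⟩ := exists_nVol_finslerBall_le hopen hconv hbdd hf0 hfg hfsupp hgsupp
  set K := convexHull ℝ ({p, a, b} : Set ℝ²)
  have hKΩ : interior K ⊆ Ω := by
    have hK : K ⊆ closure Ω := convexHull_min (insert_subset (frontier_subset_closure hp)
      (pair_subset (subset_closure ha) (subset_closure hb))) hconv.closure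
    refine (interior_mono hK).trans_eq ?_
    rw [hconv.interior_closure_eq_interior_of_nonempty_interior
      (by rw [hopen.interior_eq]; exact ⟨a, ha⟩), hopen.interior_eq]
  obtain ⟨q, hq⟩ := interior_convexHull_nonempty_of_not_collinear (by simp) hnc
  have hpos : ∀ {h : ℝ² →L[ℝ] ℝ}, (∀ x ∈ Ω, h x < h p) → ∀ x ∈ interior K, 0 < h (p - x) :=
    fun hh x hx => by rw [map_sub, sub_pos]; exact hh x (hKΩ hx)
  have hdiv : ∫⁻ x in interior K, (nVol (finslerBall Ω x))⁻¹ = ⊤ :=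
    eq_top_mono (setLIntegral_mono' isOpen_interior.measurableSet fun x hx =>
        ENNReal.inv_le_inv.2 (hnVol x (hKΩ hx)))
      (setLIntegral_inv_mul_eq_top volume (by simp) (convex_convexHull ℝ _)
        (subset_closure (subset_convexHull ℝ _ (mem_insert p _))) hq (hpos hfsupp) (hpos hgsupp)
        hC)
  rw [busemann, Measure.restrict_smul, lintegral_smul_measure, hdiv]
  exact ENNReal.mul_top (ENNReal.inv_ne_zero.2 (by simp [← ball_zero_eq]))

/-- Let `Ω` be a properly convex open subset of `ℙ²(ℝ)` (in an affine chart: a nonempty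
bounded convex open subset of the plane) and `p ∈ ∂Ω` a point where the boundary is not
`C¹` — there exist two supporting lines at `p` which do not coincide (given by functionals
`f, g` with `f x < f p` and `g x < g p` on `Ω`, and `g` not a multiple of `f`).  Then every
pic of `Ω` with vertex at infinity `p` — every open triangle contained in `Ω` with exactly
one vertex equal to `p`, the other two vertices `a, b` lying in `Ω` — has infinite
Busemann volume. -/
theorem pic_infinite_volume_of_not_C1
    (Ω : Set (EuclideanSpace ℝ (Fin 2)))
    (hopen : IsOpen Ω) (hconv : Convex ℝ Ω) (hbdd : Bornology.IsBounded Ω)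
    (hne : Ω.Nonempty)
    (p : EuclideanSpace ℝ (Fin 2)) (hp : p ∈ frontier Ω)
    (f g : EuclideanSpace ℝ (Fin 2) →L[ℝ] ℝ) (hf0 : f ≠ 0) (hg0 : g ≠ 0)
    (hfsupp : ∀ x ∈ Ω, f x < f p) (hgsupp : ∀ x ∈ Ω, g x < g p)
    (hfg : ¬ ∃ c : ℝ, g = c • f)
    (a b : EuclideanSpace ℝ (Fin 2)) (ha : a ∈ Ω) (hb : b ∈ Ω)
    (hnc : ¬ Collinear ℝ ({p, a, b} : Set (EuclideanSpace ℝ (Fin 2)))) :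
    busemann Ω (interior (convexHull ℝ ({p, a, b} : Set (EuclideanSpace ℝ (Fin 2))))) = ⊤ :=
  pic_infinite_volume_of_not_C1_general Ω hopen hconv hbdd p hp f g hf0 hfsupp hgsupp hfg a b ha hb
    hnc
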